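/- arXiv:math/0606202 — 11 statements merged into one kernel-verified Lean document; each statement's English description precedes it below -/
import Mathlib

section
/- (Commutativity for the system on C_n.) With the notation of the context, for each i ∈ {1,…,k}: R_i(k; n₁,…,n_k) ∘ R₀(N; m₁,…,m_N) = R₀(n_i; m_{N_{i−1}+1},…,m_{N_i}) ∘ R_i(k; T₁,…,T_k) as functions C_M → C_{n_i}. -/
/-- (Commutativity for the system on `C_n = {1,…,n}`.)
For each `i ∈ {1,…,k}`:
`R_i(k; n₁,…,n_k) ∘ R₀(N; m₁,…,m_N) = R₀(n_i; m_{N_{i-1}+1},…,m_{N_i}) ∘ R_i(k; T₁,…,T_k)`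
as functions `C_M → C_{n_i}`. -/
theorem Cn_system_commutativity
    (k : ℕ) (hk : 0 < k)
    (n : ℕ → ℕ) (hn : ∀ i' ∈ Finset.Icc 1 k, 0 < n i')
    (Nof : ℕ → ℕ) (hNof : ∀ i', Nof i' = ∑ t ∈ Finset.Icc 1 i', n t)
    (N : ℕ) (hN : N = Nof k)
    (m : ℕ → ℕ) (hm : ∀ j ∈ Finset.Icc 1 N, 0 < m j)
    (Mof : ℕ → ℕ) (hMof : ∀ i', Mof i' = ∑ t ∈ Finset.Icc 1 i', m t)
    (M : ℕ) (hM : M = Mof N)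
    (T : ℕ → ℕ) (hT : ∀ i', T i' = Mof (Nof i') - Mof (Nof (i' - 1)))
    (Tsum : ℕ → ℕ) (hTsum : ∀ i', Tsum i' = ∑ t ∈ Finset.Icc 1 i', T t)
    (i : ℕ) (hi1 : 1 ≤ i) (hik : i ≤ k)
    -- partial sums of the shifted sequence `m_{N_{i-1}+1}, …, m_{N_i}`
    (Pof : ℕ → ℕ) (hPof : ∀ l, Pof l = ∑ t ∈ Finset.Icc 1 l, m (Nof (i - 1) + t))
    -- `R_i(k; n₁,…,n_k) : C_N → C_{n_i}`
    (RiN : ℕ → ℕ)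
    (hRiN : ∀ r ∈ Finset.Icc 1 N,
      RiN r = if r ≤ Nof (i - 1) then 1 else if r ≤ Nof i then r - Nof (i - 1) else n i)
    -- `R₀(N; m₁,…,m_N) : C_M → C_N`
    (R0m : ℕ → ℕ)
    (hR0m : ∀ r ∈ Finset.Icc 1 M, ∀ j ∈ Finset.Icc 1 N,
      (R0m r = j ↔ Mof (j - 1) + 1 ≤ r ∧ r ≤ Mof j))
    -- `R₀(n_i; m_{N_{i-1}+1},…,m_{N_i}) : C_{T_i} → C_{n_i}`
    (R0p : ℕ → ℕ)
    (hR0p : ∀ r ∈ Finset.Icc 1 (T i), ∀ l ∈ Finset.Icc 1 (n i),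
      (R0p r = l ↔ Pof (l - 1) + 1 ≤ r ∧ r ≤ Pof l))
    -- `R_i(k; T₁,…,T_k) : C_M → C_{T_i}`
    (RiT : ℕ → ℕ)
    (hRiT : ∀ r ∈ Finset.Icc 1 M,
      RiT r = if r ≤ Tsum (i - 1) then 1 else if r ≤ Tsum i then r - Tsum (i - 1) else T i) :
    ∀ r ∈ Finset.Icc 1 M, RiN (R0m r) = R0p (RiT r) := by

  intro r hrmem
  have hr := Finset.mem_Icc.mp hrmem
  have hNof0 : Nof 0 = 0 := by rw [hNof]; simp
  have hMof0 : Mof 0 = 0 := by rw [hMof]; simp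
  have hNofmono : ∀ a b, a ≤ b → Nof a ≤ Nof b := by
    intro a b hab; rw [hNof, hNof]
    exact Finset.sum_le_sum_of_subset (Finset.Icc_subset_Icc_right hab)
  have hMofmono : ∀ a b, a ≤ b → Mof a ≤ Mof b := by
    intro a b hab; rw [hMof, hMof]
    exact Finset.sum_le_sum_of_subset (Finset.Icc_subset_Icc_right hab)
  have hMofstep : ∀ a, Mof (a+1) = Mof a + m (a+1) := by
    intro a; rw [hMof, hMof, Finset.sum_Icc_succ_top (by omega)]
  have hNi : Nof i = Nof (i-1) + n i := by
    have h := hNof ((i-1)+1)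
    rw [Finset.sum_Icc_succ_top (by omega), ← hNof, show i-1+1 = i by omega] at h
    exact h
  have hni : 0 < n i := hn i (Finset.mem_Icc.mpr ⟨hi1, hik⟩)
  have hNiN : Nof i ≤ N := hN ▸ hNofmono i k hik
  have hMstrict : ∀ j, 1 ≤ j → j ≤ N → Mof (j-1) < Mof j := by
    intro j h1 h2
    have h3 := hMofstep (j-1); rw [show j-1+1 = j by omega] at h3
    have h4 := hm j (Finset.mem_Icc.mpr ⟨h1, h2⟩); omega
  have hPshift : ∀ l, Mof (Nof (i-1)) + Pof l = Mof (Nof (i-1) + l) := by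
    intro l; induction l with
    | zero => rw [hPof]; simp
    | succ l ih =>
      rw [hPof, Finset.sum_Icc_succ_top (by omega), ← hPof,
        show Nof (i-1) + (l+1) = (Nof (i-1) + l) + 1 by ring, hMofstep]
      omega
  have hTsumEq : ∀ l, Tsum l = Mof (Nof l) := by
    intro l; induction l with
    | zero => rw [hTsum]; simp [hNof0, hMof0]
    | succ l ih =>
      have hmono := hMofmono (Nof l) (Nof (l+1)) (hNofmono l (l+1) (by omega))
      rw [hTsum, Finset.sum_Icc_succ_top (by omega), ← hTsum, ih, hT,
        show l+1-1 = l by omega]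
      omega
  have hTi : Mof (Nof (i-1)) < Mof (Nof i) := by
    have h1 : 1 ≤ Nof i := by omega
    have h2 := hMstrict (Nof i) h1 hNiN
    have h3 := hMofmono (Nof (i-1)) (Nof i - 1) (by omega)
    omega
  have hTival : T i = Mof (Nof i) - Mof (Nof (i-1)) := hT i
  have hTipos : 1 ≤ T i := by omega
  -- find j := R0m r
  have hex : ∃ j, r ≤ Mof j := ⟨N, by omega⟩
  set j := Nat.find hex with hj
  have hjle : r ≤ Mof j := Nat.find_spec hex
  have hjmin : ∀ j' < j, ¬ r ≤ Mof j' := fun j' h => Nat.find_min hex h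
  have hj1 : 1 ≤ j := by
    by_contra h
    have h0 : j = 0 := by omega
    rw [h0, hMof0] at hjle; omega
  have hjN : j ≤ N := by
    by_contra h
    exact hjmin N (by omega) (by omega)
  have hjlow : Mof (j-1) + 1 ≤ r := by
    have := hjmin (j-1) (by omega); omega
  have hjmem : j ∈ Finset.Icc 1 N := Finset.mem_Icc.mpr ⟨hj1, hjN⟩
  have hR0mr : R0m r = j := (hR0m r hrmem j hjmem).mpr ⟨hjlow, hjle⟩
  rw [hR0mr, hRiN j hjmem, hRiT r hrmem, hTsumEq (i-1), hTsumEq i]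
  by_cases hc1 : j ≤ Nof (i-1)
  · -- case 1
    have hrle : r ≤ Mof (Nof (i-1)) := le_trans hjle (hMofmono j (Nof (i-1)) hc1)
    rw [if_pos hc1, if_pos hrle]
    have hP0 : Pof 0 = 0 := by rw [hPof]; simp
    have hP1 : 1 ≤ Pof 1 := by
      have h1 := hPshift 1
      have h2 := hMstrict (Nof (i-1) + 1) (by omega) (by omega)
      have h3 : Nof (i-1) + 1 - 1 = Nof (i-1) := by omega
      rw [h3] at h2; omega
    exact ((hR0p 1 (Finset.mem_Icc.mpr ⟨le_refl 1, hTipos⟩)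
      1 (Finset.mem_Icc.mpr ⟨le_refl 1, hni⟩)).mpr (by simp [hP0, hP1])).symm
  · rw [if_neg hc1]
    have hrgt : ¬ r ≤ Mof (Nof (i-1)) := by
      have := hMofmono (Nof (i-1)) (j-1) (by omega); omega
    rw [if_neg hrgt]
    by_cases hc2 : j ≤ Nof i
    · -- case 2
      have hrle2 : r ≤ Mof (Nof i) := le_trans hjle (hMofmono j (Nof i) hc2)
      rw [if_pos hc2, if_pos hrle2]
      set l := j - Nof (i-1) with hl
      set s := r - Mof (Nof (i-1)) with hs
      have hl1 : 1 ≤ l := by omega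
      have hln : l ≤ n i := by omega
      have hs1 : 1 ≤ s := by omega
      have hsT : s ≤ T i := by omega
      have hPl : Mof (Nof (i-1)) + Pof l = Mof j := by
        have := hPshift l; rwa [show Nof (i-1) + l = j by omega] at this
      have hPl1 : Mof (Nof (i-1)) + Pof (l-1) = Mof (j-1) := by
        have := hPshift (l-1); rwa [show Nof (i-1) + (l-1) = j-1 by omega] at this
      have hmono2 := hMofmono (Nof (i-1)) (j-1) (by omega)
      exact ((hR0p s (Finset.mem_Icc.mpr ⟨hs1, hsT⟩)
        l (Finset.mem_Icc.mpr ⟨hl1, hln⟩)).mpr ⟨by omega, by omega⟩).symm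
    · -- case 3
      rw [if_neg hc2]
      have hrgt2 : ¬ r ≤ Mof (Nof i) := by
        have := hMofmono (Nof i) (j-1) (by omega); omega
      rw [if_neg hrgt2]
      have hPn : Mof (Nof (i-1)) + Pof (n i) = Mof (Nof i) := by
        have := hPshift (n i); rwa [show Nof (i-1) + n i = Nof i by omega] at this
      have hPn1 : Mof (Nof (i-1)) + Pof (n i - 1) = Mof (Nof i - 1) := by
        have := hPshift (n i - 1)
        rwa [show Nof (i-1) + (n i - 1) = Nof i - 1 by omega] at this
      have hstr := hMstrict (Nof i) (by omega) hNiN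
      have hmono3 := hMofmono (Nof (i-1)) (Nof i - 1) (by omega)
      exact ((hR0p (T i) (Finset.mem_Icc.mpr ⟨hTipos, le_refl _⟩)
        (n i) (Finset.mem_Icc.mpr ⟨hni, le_refl _⟩)).mpr ⟨by omega, by omega⟩).symm
end

section
/- (Closure for the system on C_n.) With the notation of the context, for each i ∈ {1,…,k} and each j ∈ {1,…,n_i}: R_{N_{i−1}+j}(N; m₁,…,m_N) = R_j(n_i; m_{N_{i−1}+1},…,m_{N_i}) ∘ R_i(k; T₁,…,T_k) as functions C_M → C_{m_{N_{i−1}+j}}. -/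
/-- (Closure for the system on `C_n = {1,…,n}`.)
For each `i ∈ {1,…,k}` and each `j ∈ {1,…,n_i}`:
`R_{N_{i-1}+j}(N; m₁,…,m_N) = R_j(n_i; m_{N_{i-1}+1},…,m_{N_i}) ∘ R_i(k; T₁,…,T_k)`
as functions `C_M → C_{m_{N_{i-1}+j}}`. -/
theorem Cn_system_closure
    (k : ℕ) (hk : 0 < k)
    (n : ℕ → ℕ) (hn : ∀ i' ∈ Finset.Icc 1 k, 0 < n i')
    (Nof : ℕ → ℕ) (hNof : ∀ i', Nof i' = ∑ t ∈ Finset.Icc 1 i', n t)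
    (N : ℕ) (hN : N = Nof k)
    (m : ℕ → ℕ) (hm : ∀ j' ∈ Finset.Icc 1 N, 0 < m j')
    (Mof : ℕ → ℕ) (hMof : ∀ i', Mof i' = ∑ t ∈ Finset.Icc 1 i', m t)
    (M : ℕ) (hM : M = Mof N)
    (T : ℕ → ℕ) (hT : ∀ i', T i' = Mof (Nof i') - Mof (Nof (i' - 1)))
    (Tsum : ℕ → ℕ) (hTsum : ∀ i', Tsum i' = ∑ t ∈ Finset.Icc 1 i', T t)
    (i : ℕ) (hi1 : 1 ≤ i) (hik : i ≤ k)
    (j : ℕ) (hj1 : 1 ≤ j) (hjn : j ≤ n i)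
    -- partial sums of the shifted sequence `m_{N_{i-1}+1}, …, m_{N_i}`
    (Pof : ℕ → ℕ) (hPof : ∀ l, Pof l = ∑ t ∈ Finset.Icc 1 l, m (Nof (i - 1) + t))
    -- `R_{N_{i-1}+j}(N; m₁,…,m_N) : C_M → C_{m_{N_{i-1}+j}}`
    (RNj : ℕ → ℕ)
    (hRNj : ∀ r ∈ Finset.Icc 1 M,
      RNj r = if r ≤ Mof (Nof (i - 1) + j - 1) then 1
        else if r ≤ Mof (Nof (i - 1) + j) then r - Mof (Nof (i - 1) + j - 1)
        else m (Nof (i - 1) + j))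
    -- `R_j(n_i; m_{N_{i-1}+1},…,m_{N_i}) : C_{T_i} → C_{m_{N_{i-1}+j}}`
    (Rjp : ℕ → ℕ)
    (hRjp : ∀ r ∈ Finset.Icc 1 (T i),
      Rjp r = if r ≤ Pof (j - 1) then 1
        else if r ≤ Pof j then r - Pof (j - 1)
        else m (Nof (i - 1) + j))
    -- `R_i(k; T₁,…,T_k) : C_M → C_{T_i}`
    (RiT : ℕ → ℕ)
    (hRiT : ∀ r ∈ Finset.Icc 1 M,
      RiT r = if r ≤ Tsum (i - 1) then 1 else if r ≤ Tsum i then r - Tsum (i - 1) else T i) :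
    ∀ r ∈ Finset.Icc 1 M, RNj r = Rjp (RiT r) := by
  have monoN : ∀ a b : ℕ, a ≤ b → Nof a ≤ Nof b := by
    intro a b hab
    rw [hNof, hNof]
    exact Finset.sum_le_sum_of_subset (Finset.Icc_subset_Icc le_rfl hab)
  have monoM : ∀ a b : ℕ, a ≤ b → Mof a ≤ Mof b := by
    intro a b hab
    rw [hMof, hMof]
    exact Finset.sum_le_sum_of_subset (Finset.Icc_subset_Icc le_rfl hab)
  have hMstep : ∀ s, Mof (s + 1) = Mof s + m (s + 1) := by
    intro s
    rw [hMof, hMof, Finset.sum_Icc_succ_top (by omega)]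
  have hMshift : ∀ a l, Mof (a + l) = Mof a + ∑ t ∈ Finset.Icc 1 l, m (a + t) := by
    intro a l
    induction l with
    | zero => simp
    | succ t ih =>
      have e : a + (t + 1) = (a + t) + 1 := by ring
      rw [e, hMstep, ih, Finset.sum_Icc_succ_top (by omega : 1 ≤ t + 1), ← add_assoc,
        Nat.add_assoc a t 1]
  have hNi : Nof i = Nof (i - 1) + n i := by
    obtain ⟨t, rfl⟩ : ∃ t, i = t + 1 := ⟨i - 1, by omega⟩
    simp only [Nat.add_sub_cancel]
    rw [hNof, hNof, Finset.sum_Icc_succ_top (by omega)]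
  have hTsumM : ∀ i', Tsum i' = Mof (Nof i') := by
    intro i'
    induction i' with
    | zero =>
      have hN0 : Nof 0 = 0 := by rw [hNof]; simp
      have hM0 : Mof 0 = 0 := by rw [hMof]; simp
      rw [hTsum, hN0, hM0]; simp
    | succ t ih =>
      have h1 : Mof (Nof t) ≤ Mof (Nof (t + 1)) := monoM _ _ (monoN _ _ (by omega))
      have h2 := hT (t + 1)
      simp only [Nat.add_sub_cancel] at h2
      rw [hTsum, Finset.sum_Icc_succ_top (by omega), ← hTsum, ih, h2]
      omega
  intro r hr
  rw [Finset.mem_Icc] at hr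
  have e1 : Nof (i - 1) + j - 1 = Nof (i - 1) + (j - 1) := by omega
  have hp1 : Mof (Nof (i - 1) + j - 1) = Mof (Nof (i - 1)) + Pof (j - 1) := by
    rw [e1, hMshift, hPof]
  have hp2 : Mof (Nof (i - 1) + j) = Mof (Nof (i - 1)) + Pof j := by
    rw [hMshift, hPof]
  have hje : Nof (i - 1) + j ≤ Nof i := by omega
  have hjN : Nof (i - 1) + j ≤ N := by
    have := monoN i k hik
    omega
  have hmpos : 0 < m (Nof (i - 1) + j) := hm _ (Finset.mem_Icc.mpr ⟨by omega, hjN⟩)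
  have hstep : Mof (Nof (i - 1) + j) = Mof (Nof (i - 1) + j - 1) + m (Nof (i - 1) + j) := by
    have e2 : Nof (i - 1) + j - 1 + 1 = Nof (i - 1) + j := by omega
    rw [← e2, hMstep, e2]
  have hAle : Mof (Nof (i - 1)) ≤ Mof (Nof (i - 1) + j - 1) := monoM _ _ (by omega)
  have hBle : Mof (Nof (i - 1) + j) ≤ Mof (Nof i) := monoM _ _ hje
  have hBM : Mof (Nof i) ≤ M := by
    have h1 : Mof (Nof i) ≤ Mof (Nof k) := monoM _ _ (monoN _ _ hik)
    have h2 : M = Mof (Nof k) := by rw [hM, hN]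
    omega
  have hT1 : Tsum (i - 1) = Mof (Nof (i - 1)) := hTsumM _
  have hT2 : Tsum i = Mof (Nof i) := hTsumM _
  have hTi : T i = Mof (Nof i) - Mof (Nof (i - 1)) := hT i
  have hTipos : 0 < T i := by omega
  rw [hRNj r (Finset.mem_Icc.mpr hr), hRiT r (Finset.mem_Icc.mpr hr)]
  by_cases h1 : r ≤ Tsum (i - 1)
  · rw [if_pos h1, hRjp 1 (Finset.mem_Icc.mpr ⟨le_refl 1, hTipos⟩)]
    split_ifs <;> omega
  · rw [if_neg h1]
    by_cases h2 : r ≤ Tsum i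
    · rw [if_pos h2, hRjp _ (Finset.mem_Icc.mpr ⟨by omega, by omega⟩)]
      split_ifs <;> omega
    · rw [if_neg h2, hRjp _ (Finset.mem_Icc.mpr ⟨hTipos, le_refl _⟩)]
      split_ifs <;> omega
end

section
/- (Idempotency for the system on subsets.) With the notation of the context, for every non-empty subset X of {1,…,M}: R₀(k; n₁,…,n_k)(R₀(N; m₁,…,m_N)(X)) = R₀(k; T₁,…,T_k)(X) as subsets of {1,…,k}. -/
/-- The function `R₀(k; n₁,…,n_k) : P_N → P_k` of the subset system, where `S` is the
partial-sum function of the sequence (`S i = n₁ + ⋯ + nᵢ`):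
`i ∈ R₀(X)` iff `1 ≤ i ≤ k` and `r ∈ X` for some `r` with `S(i-1) + 1 ≤ r ≤ S i`. -/
def R0sub (S : ℕ → ℕ) (k : ℕ) (X : Set ℕ) : Set ℕ :=
  {i | 1 ≤ i ∧ i ≤ k ∧ ∃ r ∈ X, S (i - 1) + 1 ≤ r ∧ r ≤ S i}

/-- (Idempotency for the system on subsets.)
For every non-empty subset `X` of `{1,…,M}`:
`R₀(k; n₁,…,n_k)(R₀(N; m₁,…,m_N)(X)) = R₀(k; T₁,…,T_k)(X)` as subsets of `{1,…,k}`. -/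
theorem Pn_system_idempotency
    (k : ℕ) (hk : 0 < k)
    (n : ℕ → ℕ) (hn : ∀ i ∈ Finset.Icc 1 k, 0 < n i)
    (Nof : ℕ → ℕ) (hNof : ∀ i, Nof i = ∑ t ∈ Finset.Icc 1 i, n t)
    (N : ℕ) (hN : N = Nof k)
    (m : ℕ → ℕ) (hm : ∀ j ∈ Finset.Icc 1 N, 0 < m j)
    (Mof : ℕ → ℕ) (hMof : ∀ i, Mof i = ∑ t ∈ Finset.Icc 1 i, m t)
    (M : ℕ) (hM : M = Mof N)
    (T : ℕ → ℕ) (hT : ∀ i, T i = Mof (Nof i) - Mof (Nof (i - 1)))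
    (Tsum : ℕ → ℕ) (hTsum : ∀ i, Tsum i = ∑ t ∈ Finset.Icc 1 i, T t) :
    ∀ X : Set ℕ, X ⊆ Set.Icc 1 M → X.Nonempty →
      R0sub Nof k (R0sub Mof N X) = R0sub Tsum k X := by
  intro X hX hXne
  have hMono : ∀ (f g : ℕ → ℕ), (∀ i, f i = ∑ t ∈ Finset.Icc 1 i, g t) → Monotone f := by
    intro f g hf a b hab
    rw [hf a, hf b]
    exact Finset.sum_le_sum_of_subset (Finset.Icc_subset_Icc_right hab)
  have hMofMono := hMono Mof m hMof
  have hNofMono := hMono Nof n hNof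
  have hNof0 : Nof 0 = 0 := by rw [hNof]; simp
  have hMof0 : Mof 0 = 0 := by rw [hMof]; simp
  have hTs : ∀ i, Tsum i = Mof (Nof i) := by
    intro i
    induction i with
    | zero => rw [hTsum]; simp [hNof0, hMof0]
    | succ i ih =>
      rw [hTsum] at ih ⊢
      rw [Finset.sum_Icc_succ_top (by omega : 1 ≤ i + 1), ih, hT]
      have h1 : Mof (Nof i) ≤ Mof (Nof (i + 1)) := hMofMono (hNofMono (by omega))
      simp only [Nat.add_sub_cancel]
      omega
  ext i
  simp only [R0sub, Set.mem_setOf_eq, hTs]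
  constructor
  · rintro ⟨h1, h2, r, ⟨hr1, hrN, s, hsX, hs1, hs2⟩, hra, hrb⟩
    refine ⟨h1, h2, s, hsX, ?_, ?_⟩
    · have : Mof (Nof (i - 1)) ≤ Mof (r - 1) := hMofMono (by omega)
      omega
    · exact le_trans hs2 (hMofMono hrb)
  · rintro ⟨h1, h2, s, hsX, hs1, hs2⟩
    have hex : ∃ r, s ≤ Mof r := ⟨Nof i, hs2⟩
    set r := Nat.find hex with hr
    have hrle : s ≤ Mof r := Nat.find_spec hex
    have hrmin : ∀ q, q < r → ¬ s ≤ Mof q := fun q hq => Nat.find_min hex hq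
    have hrpos : Nof (i - 1) < r := by
      by_contra h
      exact absurd hs2 (by
        have : Mof r ≤ Mof (Nof (i - 1)) := hMofMono (by omega)
        omega)
    have hrub : r ≤ Nof i := Nat.find_min' hex hs2
    have hrN : r ≤ N := le_trans hrub (by rw [hN]; exact hNofMono h2)
    have hprev : Mof (r - 1) < s := by
      have := hrmin (r - 1) (by omega)
      omega
    exact ⟨h1, h2, r, ⟨by omega, hrN, s, hsX, by omega, hrle⟩, hrpos, hrub⟩
end

section
/- (Commutativity for the system on subsets.) With the notation of the context, for each i ∈ {1,…,k} and every non-empty subset X of {1,…,M}: R_i(k; n₁,…,n_k)(R₀(N; m₁,…,m_N)(X)) = R₀(n_i; m_{N_{i−1}+1},…,m_{N_i})(R_i(k; T₁,…,T_k)(X)) as subsets of {1,…,n_i}. -/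
/-- The function `R_j(k; n₁,…,n_k) : P_N → P_{n_j}` of the subset system, where `S` is the
partial-sum function of the sequence, `N = S k` is the total sum, and `nj = n_j`:
`i ∈ R_j(X)` iff (`i = 1` and `r ∈ X` for some `1 ≤ r ≤ S(j-1)+1`), or
(`2 ≤ i ≤ n_j - 1` and `i + S(j-1) ∈ X`), or
(`i = n_j` and `r ∈ X` for some `S j ≤ r ≤ N`). -/
def Rjsub (S : ℕ → ℕ) (N nj j : ℕ) (X : Set ℕ) : Set ℕ :=
  {i | (i = 1 ∧ ∃ r ∈ X, 1 ≤ r ∧ r ≤ S (j - 1) + 1)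
     ∨ (2 ≤ i ∧ i ≤ nj - 1 ∧ i + S (j - 1) ∈ X)
     ∨ (i = nj ∧ ∃ r ∈ X, S j ≤ r ∧ r ≤ N)}

/-- (Commutativity for the system on subsets.)
For each `i ∈ {1,…,k}` and every non-empty subset `X` of `{1,…,M}`:
`R_i(k; n₁,…,n_k)(R₀(N; m₁,…,m_N)(X)) = R₀(n_i; m_{N_{i-1}+1},…,m_{N_i})(R_i(k; T₁,…,T_k)(X))`
as subsets of `{1,…,n_i}`. -/
theorem Pn_system_commutativity
    (k : ℕ) (hk : 0 < k)
    (n : ℕ → ℕ) (hn : ∀ i' ∈ Finset.Icc 1 k, 0 < n i')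
    (Nof : ℕ → ℕ) (hNof : ∀ i', Nof i' = ∑ t ∈ Finset.Icc 1 i', n t)
    (N : ℕ) (hN : N = Nof k)
    (m : ℕ → ℕ) (hm : ∀ j ∈ Finset.Icc 1 N, 0 < m j)
    (Mof : ℕ → ℕ) (hMof : ∀ i', Mof i' = ∑ t ∈ Finset.Icc 1 i', m t)
    (M : ℕ) (hM : M = Mof N)
    (T : ℕ → ℕ) (hT : ∀ i', T i' = Mof (Nof i') - Mof (Nof (i' - 1)))
    (Tsum : ℕ → ℕ) (hTsum : ∀ i', Tsum i' = ∑ t ∈ Finset.Icc 1 i', T t)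
    (i : ℕ) (hi1 : 1 ≤ i) (hik : i ≤ k)
    -- partial sums of the shifted sequence `m_{N_{i-1}+1}, …, m_{N_i}`
    (Pof : ℕ → ℕ) (hPof : ∀ l, Pof l = ∑ t ∈ Finset.Icc 1 l, m (Nof (i - 1) + t)) :
    ∀ X : Set ℕ, X ⊆ Set.Icc 1 M → X.Nonempty →
      Rjsub Nof N (n i) i (R0sub Mof N X)
        = R0sub Pof (n i) (Rjsub Tsum (Tsum k) (T i) i X) := by
  intro X hXM hXne
  have hni : 1 ≤ n i := hn i (Finset.mem_Icc.mpr ⟨hi1, hik⟩)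
  -- basic partial-sum lemmas
  have hMmono : ∀ a b : ℕ, a ≤ b → Mof a ≤ Mof b := by
    intro a b hab
    rw [hMof, hMof]
    exact Finset.sum_le_sum_of_subset (Finset.Icc_subset_Icc_right hab)
  have hNmono : ∀ a b : ℕ, a ≤ b → Nof a ≤ Nof b := by
    intro a b hab
    rw [hNof, hNof]
    exact Finset.sum_le_sum_of_subset (Finset.Icc_subset_Icc_right hab)
  have hM0 : Mof 0 = 0 := by rw [hMof]; simp
  have hN0 : Nof 0 = 0 := by rw [hNof]; simp
  have hMstep : ∀ a : ℕ, Mof (a + 1) = Mof a + m (a + 1) := by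
    intro a
    rw [hMof, hMof, Finset.sum_Icc_succ_top (by omega : (1:ℕ) ≤ a + 1)]
  have hNstep : ∀ a : ℕ, Nof (a + 1) = Nof a + n (a + 1) := by
    intro a
    rw [hNof, hNof, Finset.sum_Icc_succ_top (by omega : (1:ℕ) ≤ a + 1)]
  have hMstrict : ∀ a b : ℕ, a < b → b ≤ N → Mof a < Mof b := by
    intro a b hab hbN
    have h1 := hMstep a
    have h2 := hm (a + 1) (Finset.mem_Icc.mpr ⟨by omega, by omega⟩)
    have h3 := hMmono (a + 1) b (by omega)
    omega
  have hAB : (Nof (i - 1)) + n i = (Nof i) := by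
    have := hNstep (i - 1)
    rw [show i - 1 + 1 = i by omega] at this
    omega
  have hBN : (Nof i) ≤ N := by
    have := hNmono i k hik
    omega
  have hTs : ∀ t : ℕ, Tsum t = Mof (Nof t) := by
    intro t
    induction t with
    | zero => rw [hTsum, hN0, hM0]; simp
    | succ t ih =>
      rw [hTsum, Finset.sum_Icc_succ_top (by omega : (1:ℕ) ≤ t + 1), ← hTsum, ih, hT]
      rw [show t + 1 - 1 = t by omega]
      have := hMmono (Nof t) (Nof (t + 1)) (hNmono t (t + 1) (by omega))
      omega
  have hPs : ∀ l : ℕ, Pof l = Mof ((Nof (i - 1)) + l) - Mof (Nof (i - 1)) := by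
    intro l
    induction l with
    | zero => rw [hPof]; simp
    | succ l ih =>
      rw [hPof, Finset.sum_Icc_succ_top (by omega : (1:ℕ) ≤ l + 1), ← hPof, ih]
      have h1 := hMstep ((Nof (i - 1)) + l)
      have h2 := hMmono (Nof (i - 1)) ((Nof (i - 1)) + l) (by omega)
      rw [show (Nof (i - 1)) + (l + 1) = (Nof (i - 1)) + l + 1 by omega, h1]
      omega
  have hTi : T i = Mof (Nof i) - Mof (Nof (i - 1)) := by rw [hT]
  have hTsK : Tsum k = M := by rw [hTs, ← hN, hM]
  have hTsA : Tsum (i - 1) = Mof (Nof (i - 1)) := by rw [hTs]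
  have hTsB : Tsum i = Mof (Nof i) := by rw [hTs]
  have hMAB : Mof (Nof (i - 1)) < Mof (Nof i) := hMstrict (Nof (i - 1)) (Nof i) (by omega) hBN
  have hMA1 : Mof (Nof (i - 1)) < Mof ((Nof (i - 1)) + 1) := hMstrict (Nof (i - 1)) ((Nof (i - 1)) + 1) (by omega) (by omega)
  -- locating a point of X in the Mof-intervals
  have exists_p : ∀ r : ℕ, 1 ≤ r → r ≤ M → ∃ p, 1 ≤ p ∧ p ≤ N ∧ Mof (p - 1) < r ∧ r ≤ Mof p := by
    intro r hr1 hrM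
    have hex : ∃ p, r ≤ Mof p := ⟨N, by omega⟩
    have hpos : 1 ≤ Nat.find hex := by
      rcases Nat.eq_zero_or_pos (Nat.find hex) with h0 | h0
      · have := Nat.find_spec hex; rw [h0, hM0] at this; omega
      · exact h0
    have hmin := Nat.find_min hex (show Nat.find hex - 1 < Nat.find hex by omega)
    exact ⟨Nat.find hex, hpos, Nat.find_min' hex (by omega), by omega, Nat.find_spec hex⟩
  have key1 : ∀ j : ℕ, j ∈ Rjsub Nof N (n i) i (R0sub Mof N X) ↔
      (1 ≤ j ∧ j ≤ n i ∧ ∃ r ∈ X,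
        (if j = 1 then 1 else Mof ((Nof (i - 1)) + (j - 1)) + 1) ≤ r ∧
        r ≤ (if j = n i then M else Mof ((Nof (i - 1)) + j))) := by
    intro j
    simp only [Rjsub, R0sub, Set.mem_setOf_eq]
    constructor
    · rintro (⟨rfl, p, hpY, hp1', hpA⟩ | ⟨hj2, hjn, hjY⟩ | ⟨rfl, p, hpY, hpB, hpN'⟩)
      · obtain ⟨hp1, hpN, r, hrX, hrlo, hrhi⟩ := hpY
        have hrM := Set.mem_Icc.mp (hXM hrX)
        refine ⟨le_refl 1, hni, r, hrX, by rw [if_pos rfl]; exact hrM.1, ?_⟩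
        by_cases h1 : (1:ℕ) = n i
        · rw [if_pos h1]; exact hrM.2
        · rw [if_neg h1]
          exact le_trans hrhi (hMmono p ((Nof (i - 1)) + 1) (by omega))
      · obtain ⟨hp1, hpN, r, hrX, hrlo, hrhi⟩ := hjY
        refine ⟨by omega, by omega, r, hrX, ?_, ?_⟩
        · rw [if_neg (by omega : ¬ j = 1)]
          rw [show j + (Nof (i - 1)) - 1 = (Nof (i - 1)) + (j - 1) by omega] at hrlo
          exact hrlo
        · rw [if_neg (by omega : ¬ j = n i)]
          rw [show j + (Nof (i - 1)) = (Nof (i - 1)) + j by omega] at hrhi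
          exact hrhi
      · obtain ⟨hp1, hpN, r, hrX, hrlo, hrhi⟩ := hpY
        have hrM := Set.mem_Icc.mp (hXM hrX)
        refine ⟨hni, le_refl (n i), r, hrX, ?_, by rw [if_pos rfl]; exact hrM.2⟩
        by_cases h1 : n i = 1
        · rw [if_pos h1]; exact hrM.1
        · rw [if_neg h1]
          have h3 : Mof ((Nof (i - 1)) + (n i - 1)) ≤ Mof (p - 1) := hMmono _ _ (by omega)
          omega
    · rintro ⟨hj1, hjni, r, hrX, hlo, hhi⟩
      have hrM := Set.mem_Icc.mp (hXM hrX)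
      obtain ⟨p, hp1, hpN, hplo, hphi⟩ := exists_p r hrM.1 hrM.2
      by_cases hj : j = 1
      · subst hj
        by_cases hpA : p ≤ (Nof (i - 1)) + 1
        · exact Or.inl ⟨rfl, p, ⟨hp1, hpN, r, hrX, by omega, hphi⟩, hp1, hpA⟩
        · by_cases h1 : (1:ℕ) = n i
          · refine Or.inr (Or.inr ⟨h1, p, ⟨hp1, hpN, r, hrX, by omega, hphi⟩, by omega, hpN⟩)
          · exfalso
            rw [if_neg h1] at hhi
            have h3 : Mof ((Nof (i - 1)) + 1) ≤ Mof (p - 1) := hMmono _ _ (by omega)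
            omega
      · by_cases hjn : j = n i
        · have hlo' : Mof ((Nof (i - 1)) + (j - 1)) + 1 ≤ r := by rw [if_neg hj] at hlo; exact hlo
          refine Or.inr (Or.inr ⟨hjn, p, ⟨hp1, hpN, r, hrX, by omega, hphi⟩, ?_, hpN⟩)
          by_contra hc
          have h3 : Mof p ≤ Mof ((Nof (i - 1)) + (j - 1)) := hMmono _ _ (by omega)
          omega
        · have hlo' : Mof ((Nof (i - 1)) + (j - 1)) + 1 ≤ r := by rw [if_neg hj] at hlo; exact hlo
          have hhi' : r ≤ Mof ((Nof (i - 1)) + j) := by rw [if_neg hjn] at hhi; exact hhi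
          refine Or.inr (Or.inl ⟨by omega, by omega, by omega, by omega, r, hrX, ?_, ?_⟩)
          · rw [show j + (Nof (i - 1)) - 1 = (Nof (i - 1)) + (j - 1) by omega]; omega
          · rw [show j + (Nof (i - 1)) = (Nof (i - 1)) + j by omega]; exact hhi'
  have key2 : ∀ j : ℕ, j ∈ R0sub Pof (n i) (Rjsub Tsum (Tsum k) (T i) i X) ↔
      (1 ≤ j ∧ j ≤ n i ∧ ∃ r ∈ X,
        (if j = 1 then 1 else Mof ((Nof (i - 1)) + (j - 1)) + 1) ≤ r ∧
        r ≤ (if j = n i then M else Mof ((Nof (i - 1)) + j))) := by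
    intro j
    simp only [Rjsub, R0sub, Set.mem_setOf_eq]
    constructor
    · rintro ⟨hj1, hjni, s, hsZ, hslo, hshi⟩
      rw [hPs] at hslo hshi
      have hMAj : Mof (Nof (i - 1)) ≤ Mof ((Nof (i - 1)) + j) := hMmono _ _ (by omega)
      have hMAj1 : Mof (Nof (i - 1)) ≤ Mof ((Nof (i - 1)) + (j - 1)) := hMmono _ _ (by omega)
      rcases hsZ with ⟨rfl, r, hrX, hr1, hrhi⟩ | ⟨hs2, hsT, hsX⟩ | ⟨rfl, r, hrX, hrB, hrM'⟩
      · -- s = 1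
        rw [hTsA] at hrhi
        have hj' : j = 1 := by
          by_contra hc
          have h3 : Mof ((Nof (i - 1)) + 1) ≤ Mof ((Nof (i - 1)) + (j - 1)) := hMmono _ _ (by omega)
          omega
        subst hj'
        have hrM := Set.mem_Icc.mp (hXM hrX)
        refine ⟨le_refl 1, hni, r, hrX, by rw [if_pos rfl]; exact hrM.1, ?_⟩
        by_cases h1 : (1:ℕ) = n i
        · rw [if_pos h1]; exact hrM.2
        · rw [if_neg h1]; omega
      · rw [hTsA] at hsX
        have hrM := Set.mem_Icc.mp (hXM hsX)
        refine ⟨hj1, hjni, s + Mof (Nof (i - 1)), hsX, ?_, ?_⟩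
        · by_cases h1 : j = 1
          · rw [if_pos h1]; omega
          · rw [if_neg h1]; omega
        · by_cases h1 : j = n i
          · rw [if_pos h1]; exact hrM.2
          · rw [if_neg h1]; omega
      · -- s = T i
        rw [hTsB] at hrB
        rw [hTsK] at hrM'
        rw [hTi] at hslo hshi
        have hj' : j = n i := by
          by_contra hc
          have h3 : Mof ((Nof (i - 1)) + j) ≤ Mof ((Nof (i - 1)) + (n i - 1)) := hMmono _ _ (by omega)
          have h4 : Mof ((Nof (i - 1)) + (n i - 1)) < Mof (Nof i) := hMstrict _ _ (by omega) hBN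
          omega
        refine ⟨hj1, hjni, r, hrX, ?_, by rw [if_pos hj']; exact hrM'⟩
        by_cases h1 : j = 1
        · rw [if_pos h1]; omega
        · rw [if_neg h1]
          have h4 : Mof ((Nof (i - 1)) + (j - 1)) < Mof (Nof i) := hMstrict _ _ (by omega) hBN
          omega
    · rintro ⟨hj1, hjni, r, hrX, hlo, hhi⟩
      have hrM := Set.mem_Icc.mp (hXM hrX)
      have hMAj : Mof (Nof (i - 1)) ≤ Mof ((Nof (i - 1)) + j) := hMmono _ _ (by omega)
      have hMAj1 : Mof (Nof (i - 1)) ≤ Mof ((Nof (i - 1)) + (j - 1)) := hMmono _ _ (by omega)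
      refine ⟨hj1, hjni, ?_⟩
      by_cases hcase1 : r ≤ Mof (Nof (i - 1)) + 1
      · -- use s = 1
        have hj' : j = 1 := by
          by_contra hc
          rw [if_neg hc] at hlo
          have h3 : Mof ((Nof (i - 1)) + 1) ≤ Mof ((Nof (i - 1)) + (j - 1)) := hMmono _ _ (by omega)
          omega
        refine ⟨1, Or.inl ⟨rfl, r, hrX, hrM.1, by rw [hTsA]; exact hcase1⟩, ?_, ?_⟩
        · have h5 : (Nof (i - 1)) + (j - 1) = (Nof (i - 1)) := by omega
          rw [hPs, h5]; omega
        · rw [hPs, hj']; omega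
      · by_cases hcase2 : r < Mof (Nof i)
        · -- use s = r - Mof A
          refine ⟨r - Mof (Nof (i - 1)), Or.inr (Or.inl ⟨by omega, ?_, ?_⟩), ?_, ?_⟩
          · rw [hTi]; omega
          · rw [hTsA, show r - Mof (Nof (i - 1)) + Mof (Nof (i - 1)) = r by omega]; exact hrX
          · rw [hPs]
            have hlol : Mof ((Nof (i - 1)) + (j - 1)) < r := by
              by_cases h1 : j = 1
              · rw [show (Nof (i - 1)) + (j - 1) = (Nof (i - 1)) by omega]; omega
              · rw [if_neg h1] at hlo; omega
            omega
          · rw [hPs]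
            have hhir : r ≤ Mof ((Nof (i - 1)) + j) := by
              by_cases h1 : j = n i
              · rw [show (Nof (i - 1)) + j = (Nof i) by omega]; omega
              · rw [if_neg h1] at hhi; exact hhi
            omega
        · -- use s = T i
          have hj' : j = n i := by
            by_contra hc
            rw [if_neg hc] at hhi
            have h3 : Mof ((Nof (i - 1)) + j) ≤ Mof ((Nof (i - 1)) + (n i - 1)) := hMmono _ _ (by omega)
            have h4 : Mof ((Nof (i - 1)) + (n i - 1)) < Mof (Nof i) := hMstrict _ _ (by omega) hBN
            omega
          refine ⟨T i, Or.inr (Or.inr ⟨rfl, r, hrX,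
              by rw [hTsB]; omega, by rw [hTsK]; exact hrM.2⟩), ?_, ?_⟩
          · rw [hPs, hTi]
            have h4 : Mof ((Nof (i - 1)) + (j - 1)) < Mof (Nof i) := hMstrict _ _ (by omega) hBN
            omega
          · rw [hPs, hTi, show (Nof (i - 1)) + j = (Nof i) by omega]
  ext j
  rw [key1 j, key2 j]
end

section
/- (Closure for the system on subsets.) With the notation of the context, for each i ∈ {1,…,k}, each j ∈ {1,…,n_i}, and every non-empty subset X of {1,…,M}: R_{N_{i−1}+j}(N; m₁,…,m_N)(X) = R_j(n_i; m_{N_{i−1}+1},…,m_{N_i})(R_i(k; T₁,…,T_k)(X)) as subsets of {1,…,m_{N_{i−1}+j}}. -/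
/-- (Closure for the system on subsets.)
For each `i ∈ {1,…,k}`, each `j ∈ {1,…,n_i}`, and every non-empty subset `X` of `{1,…,M}`:
`R_{N_{i-1}+j}(N; m₁,…,m_N)(X) = R_j(n_i; m_{N_{i-1}+1},…,m_{N_i})(R_i(k; T₁,…,T_k)(X))`
as subsets of `{1,…,m_{N_{i-1}+j}}`. -/
theorem Pn_system_closure
    (k : ℕ) (hk : 0 < k)
    (n : ℕ → ℕ) (hn : ∀ i' ∈ Finset.Icc 1 k, 0 < n i')
    (Nof : ℕ → ℕ) (hNof : ∀ i', Nof i' = ∑ t ∈ Finset.Icc 1 i', n t)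
    (N : ℕ) (hN : N = Nof k)
    (m : ℕ → ℕ) (hm : ∀ j' ∈ Finset.Icc 1 N, 0 < m j')
    (Mof : ℕ → ℕ) (hMof : ∀ i', Mof i' = ∑ t ∈ Finset.Icc 1 i', m t)
    (M : ℕ) (hM : M = Mof N)
    (T : ℕ → ℕ) (hT : ∀ i', T i' = Mof (Nof i') - Mof (Nof (i' - 1)))
    (Tsum : ℕ → ℕ) (hTsum : ∀ i', Tsum i' = ∑ t ∈ Finset.Icc 1 i', T t)
    (i : ℕ) (hi1 : 1 ≤ i) (hik : i ≤ k)
    (j : ℕ) (hj1 : 1 ≤ j) (hjn : j ≤ n i)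
    -- partial sums of the shifted sequence `m_{N_{i-1}+1}, …, m_{N_i}`
    (Pof : ℕ → ℕ) (hPof : ∀ l, Pof l = ∑ t ∈ Finset.Icc 1 l, m (Nof (i - 1) + t)) :
    ∀ X : Set ℕ, X ⊆ Set.Icc 1 M → X.Nonempty →
      Rjsub Mof (Mof N) (m (Nof (i - 1) + j)) (Nof (i - 1) + j) X
        = Rjsub Pof (Pof (n i)) (m (Nof (i - 1) + j)) j
            (Rjsub Tsum (Tsum k) (T i) i X) := by
  intro X hX hXne
  have hMsucc : ∀ l, Mof (l + 1) = Mof l + m (l + 1) := by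
    intro l
    rw [hMof, hMof, Finset.sum_Icc_succ_top (Nat.le_add_left 1 l)]
  have hMmono : ∀ a b : ℕ, a ≤ b → Mof a ≤ Mof b := by
    intro a b hab
    rw [hMof, hMof]
    exact Finset.sum_le_sum_of_subset (Finset.Icc_subset_Icc_right hab)
  have hNsucc : ∀ l, Nof (l + 1) = Nof l + n (l + 1) := by
    intro l
    rw [hNof, hNof, Finset.sum_Icc_succ_top (Nat.le_add_left 1 l)]
  have hNmono : ∀ a b : ℕ, a ≤ b → Nof a ≤ Nof b := by
    intro a b hab
    rw [hNof, hNof]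
    exact Finset.sum_le_sum_of_subset (Finset.Icc_subset_Icc_right hab)
  have hNof0 : Nof 0 = 0 := by rw [hNof]; simp
  have hMof0 : Mof 0 = 0 := by rw [hMof]; simp
  -- partial sums of T telescope
  have hTsum' : ∀ l, Tsum l = Mof (Nof l) := by
    intro l
    induction l with
    | zero => rw [hTsum]; simp [hNof0, hMof0]
    | succ l ih =>
      have e1 : Tsum (l + 1) = Tsum l + T (l + 1) := by
        rw [hTsum, hTsum, Finset.sum_Icc_succ_top (Nat.le_add_left 1 l)]
      have e2 := hT (l + 1)
      have e3 : Mof (Nof l) ≤ Mof (Nof (l + 1)) :=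
        hMmono _ _ (hNmono _ _ (Nat.le_succ l))
      simp only [Nat.add_sub_cancel] at e2
      omega
  -- additive form of the partial sums of the shifted sequence
  have hPof' : ∀ l, Mof (Nof (i - 1)) + Pof l = Mof (Nof (i - 1) + l) := by
    intro l
    induction l with
    | zero => rw [hPof]; simp
    | succ l ih =>
      have e1 : Pof (l + 1) = Pof l + m (Nof (i - 1) + (l + 1)) := by
        rw [hPof, hPof, Finset.sum_Icc_succ_top (Nat.le_add_left 1 l)]
      have e2 := hMsucc (Nof (i - 1) + l)
      have e3 : Nof (i - 1) + l + 1 = Nof (i - 1) + (l + 1) := by omega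
      rw [e3] at e2
      omega
  -- key constants and facts
  have hNi : Nof (i - 1) + n i = Nof i := by
    have h := hNsucc (i - 1)
    rw [show i - 1 + 1 = i from by omega] at h
    omega
  have hqN : Nof (i - 1) + j ≤ N := by
    have h2 := hNmono i k hik
    omega
  have f1 : Mof (Nof (i - 1)) ≤ Mof (Nof (i - 1) + (j - 1)) :=
    hMmono _ _ (Nat.le_add_right _ _)
  have f2 : Mof (Nof (i - 1) + j)
      = Mof (Nof (i - 1) + (j - 1)) + m (Nof (i - 1) + j) := by
    have h := hMsucc (Nof (i - 1) + (j - 1))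
    rw [show Nof (i - 1) + (j - 1) + 1 = Nof (i - 1) + j from by omega] at h
    exact h
  have f3 : 1 ≤ m (Nof (i - 1) + j) := by
    have := hm (Nof (i - 1) + j) (Finset.mem_Icc.mpr ⟨by omega, hqN⟩)
    omega
  have f4 : Mof (Nof (i - 1) + j) ≤ Mof (Nof i) := hMmono _ _ (by omega)
  have f5 : Mof (Nof i) ≤ Mof N := by
    rw [hN]; exact hMmono _ _ (hNmono _ _ hik)
  have tEq1 : Tsum (i - 1) = Mof (Nof (i - 1)) := hTsum' (i - 1)
  have tEqi : Tsum i = Mof (Nof i) := hTsum' i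
  have tEqk : Tsum k = Mof N := by rw [hTsum' k, hN]
  have tT : T i = Mof (Nof i) - Mof (Nof (i - 1)) := hT i
  have fAD : Mof (Nof (i - 1)) ≤ Mof (Nof i) := hMmono _ _ (hNmono _ _ (by omega))
  have pEq1 : Mof (Nof (i - 1)) + Pof (j - 1) = Mof (Nof (i - 1) + (j - 1)) :=
    hPof' (j - 1)
  have pEqj : Mof (Nof (i - 1)) + Pof j = Mof (Nof (i - 1) + j) := hPof' j
  have pEqn : Mof (Nof (i - 1)) + Pof (n i) = Mof (Nof i) := by
    rw [hPof' (n i), hNi]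
  ext a
  simp only [Rjsub, Set.mem_setOf_eq]
  rw [show Nof (i - 1) + j - 1 = Nof (i - 1) + (j - 1) from by omega]
  constructor
  · rintro (⟨ha, r, hrX, hr1, hr2⟩ | ⟨ha2, ham, hmem⟩ | ⟨ha, r, hrX, hr1, hr2⟩)
    · -- a = 1
      by_cases hc1 : r ≤ Mof (Nof (i - 1)) + 1
      · exact Or.inl ⟨ha, 1, Or.inl ⟨rfl, r, hrX, hr1, by omega⟩, by omega, by omega⟩
      · by_cases hc2 : r ≤ Mof (Nof i) - 1
        · refine Or.inl ⟨ha, r - Mof (Nof (i - 1)),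
            Or.inr (Or.inl ⟨by omega, by omega, ?_⟩), by omega, by omega⟩
          rw [show r - Mof (Nof (i - 1)) + Tsum (i - 1) = r from by omega]
          exact hrX
        · refine Or.inl ⟨ha, T i,
            Or.inr (Or.inr ⟨rfl, r, hrX, by omega, by omega⟩), by omega, by omega⟩
    · -- middle clause
      refine Or.inr (Or.inl ⟨ha2, ham, Or.inr (Or.inl ⟨by omega, by omega, ?_⟩)⟩)
      rw [show a + Pof (j - 1) + Tsum (i - 1) = a + Mof (Nof (i - 1) + (j - 1))
        from by omega]
      exact hmem
    · -- a = m q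
      by_cases hc1 : Mof (Nof i) ≤ r
      · exact Or.inr (Or.inr ⟨ha, T i,
          Or.inr (Or.inr ⟨rfl, r, hrX, by omega, by omega⟩), by omega, by omega⟩)
      · by_cases hc2 : Mof (Nof (i - 1)) + 2 ≤ r
        · refine Or.inr (Or.inr ⟨ha, r - Mof (Nof (i - 1)),
            Or.inr (Or.inl ⟨by omega, by omega, ?_⟩), by omega, by omega⟩)
          rw [show r - Mof (Nof (i - 1)) + Tsum (i - 1) = r from by omega]
          exact hrX
        · exact Or.inr (Or.inr ⟨ha, 1,
            Or.inl ⟨rfl, r, hrX, by omega, by omega⟩,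
            by omega, by omega⟩)
  · rintro (⟨ha, b, hbY, hb1, hb2⟩ | ⟨ha2, ham, hbY⟩ | ⟨ha, b, hbY, hb1, hb2⟩)
    · -- a = 1
      rcases hbY with ⟨hb, r, hrX, hr1, hr2⟩ | ⟨h2b, hbT, hmem⟩ | ⟨hb, r, hrX, hr1, hr2⟩
      · exact Or.inl ⟨ha, r, hrX, hr1, by omega⟩
      · exact Or.inl ⟨ha, b + Tsum (i - 1), hmem, by omega, by omega⟩
      · exact Or.inr (Or.inr ⟨by omega, r, hrX, by omega, by omega⟩)
    · -- middle clause
      rcases hbY with ⟨hb, -⟩ | ⟨h2b, hbT, hmem⟩ | ⟨hb, -⟩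
      · exact absurd hb (by omega)
      · refine Or.inr (Or.inl ⟨ha2, ham, ?_⟩)
        rw [show a + Mof (Nof (i - 1) + (j - 1)) = a + Pof (j - 1) + Tsum (i - 1)
          from by omega]
        exact hmem
      · exact absurd hb (by omega)
    · -- a = m q
      rcases hbY with ⟨hb, r, hrX, hr1, hr2⟩ | ⟨h2b, hbT, hmem⟩ | ⟨hb, r, hrX, hr1, hr2⟩
      · exact Or.inl ⟨by omega, r, hrX, hr1, by omega⟩
      · exact Or.inr (Or.inr ⟨ha, b + Tsum (i - 1), hmem, by omega, by omega⟩)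
      · exact Or.inr (Or.inr ⟨ha, r, hrX, by omega, by omega⟩)
end

section
/- (Associativity of the operad composition γ, Theorem 1.3 of the paper.) In the setting of the context, let f ∈ C(k), gᵢ ∈ C(nᵢ) for 1 ≤ i ≤ k, and h_j ∈ C(m_j) for 1 ≤ j ≤ N, where N = n₁ + ⋯ + n_k and Nᵢ = n₁ + ⋯ + nᵢ. Then γ(γ(f; g₁,…,g_k); h₁,…,h_N) = γ(f; γ(g₁; h₁,…,h_{N₁}), γ(g₂; h_{N₁+1},…,h_{N₂}), …, γ(g_k; h_{N_{k−1}+1},…,h_N)). -/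
/-- `psum n k = n 0 + n 1 + ⋯ + n (k-1)`, the partial sums of the sequence `n`
(sequences are indexed `0, 1, 2, …`, a relabelling of the paper's `1, 2, 3, …`). -/
def psum (n : ℕ → ℕ) (k : ℕ) : ℕ :=
  ∑ t ∈ Finset.range k, n t

/-- The shifted sequence `m_{N_{i}}, m_{N_i + 1}, …` (0-based), i.e. the block of the
sequence `m` corresponding to the `i`-th entry of `n`. -/
def shiftSeq (n m : ℕ → ℕ) (i : ℕ) : ℕ → ℕ :=
  fun t => m (psum n i + t)

/-- `Tseq n m i = Tᵢ = m_{N_i} + ⋯ + m_{N_{i+1} - 1}` (0-based). -/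
def Tseq (n m : ℕ → ℕ) : ℕ → ℕ :=
  fun i => psum (shiftSeq n m i) (n i)

/-- A pre-operadic system on a sequence of non-empty sets `U = {U_n}` (Definition 1.1
of the paper): functions `R₀(k; n₀,…,n_{k-1}) : U_N → U_k` and
`Rᵢ(k; n₀,…,n_{k-1}) : U_N → U_{n_i}` (where `N = n₀ + ⋯ + n_{k-1}`), satisfying the
identity, idempotency, commutativity and closure conditions for all positive arities.
(The functions are recorded for all sequences `n : ℕ → ℕ`; the conditions are imposed
only when all the relevant entries are positive, matching the paper.) -/
structure PreOperadicSystem (U : ℕ → Type*) : Type _ where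
  R0 : ∀ (k : ℕ) (n : ℕ → ℕ), U (psum n k) → U k
  Ri : ∀ (k : ℕ) (n : ℕ → ℕ) (i : ℕ), U (psum n k) → U (n i)
  identity : ∀ (k : ℕ), 0 < k → ∀ (h : psum (fun _ => 1) k = k) (r : U k),
    R0 k (fun _ => 1) (cast (congrArg U h.symm) r) = r
  idem : ∀ (k : ℕ) (n m : ℕ → ℕ), 0 < k → (∀ i < k, 0 < n i) →
    (∀ j < psum n k, 0 < m j) →
    ∀ (h : psum m (psum n k) = psum (Tseq n m) k) (r : U (psum m (psum n k))),
      R0 k n (R0 (psum n k) m r) = R0 k (Tseq n m) (cast (congrArg U h) r)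
  comm : ∀ (k : ℕ) (n m : ℕ → ℕ) (i : ℕ), 0 < k → (∀ i' < k, 0 < n i') →
    (∀ j < psum n k, 0 < m j) → i < k →
    ∀ (h : psum m (psum n k) = psum (Tseq n m) k) (r : U (psum m (psum n k))),
      Ri k n i (R0 (psum n k) m r)
        = R0 (n i) (shiftSeq n m i) (Ri k (Tseq n m) i (cast (congrArg U h) r))
  closure : ∀ (k : ℕ) (n m : ℕ → ℕ) (i j : ℕ), 0 < k → (∀ i' < k, 0 < n i') →
    (∀ j' < psum n k, 0 < m j') → i < k → j < n i →
    ∀ (h : psum m (psum n k) = psum (Tseq n m) k) (r : U (psum m (psum n k))),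
      Ri (psum n k) m (psum n i + j) r
        = Ri (n i) (shiftSeq n m i) j (Ri k (Tseq n m) i (cast (congrArg U h) r))

lemma psum_add (m : ℕ → ℕ) (a b : ℕ) :
    psum m (a + b) = psum m a + psum (fun t => m (a + t)) b := by
  induction b with
  | zero => simp [psum]
  | succ b ih =>
      rw [Nat.add_succ]
      simp only [psum, Finset.sum_range_succ] at *
      omega

lemma psum_Tseq (n m : ℕ → ℕ) (i : ℕ) :
    psum (Tseq n m) i = psum m (psum n i) := by
  induction i with
  | zero => simp [psum]
  | succ i ih =>
      have h1 : psum n (i + 1) = psum n i + n i := by simp [psum, Finset.sum_range_succ]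
      have h2 : psum (Tseq n m) (i + 1) = psum (Tseq n m) i + Tseq n m i := by
        simp [psum, Finset.sum_range_succ]
      rw [h2, ih, h1, psum_add]
      rfl

/-- (Associativity of the operad composition `γ`; Theorem 1.3 of the
paper.)  Given a pre-operadic system on `U`, cochain spaces
`C(n) = {functions U_n → (multilinear maps Aⁿ → A)}`, and the composition
`γ(f; g₁,…,g_k)(r; x₁,…,x_N) = f(R₀(r); g₁(R₁(r); …), …, g_k(R_k(r); …))`, one has
`γ(γ(f; g₁,…,g_k); h₁,…,h_N) = γ(f; γ(g₁; …), …, γ(g_k; …))` in `C(M)`;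
both sides are written out below in fully evaluated form (at an arbitrary point
`r ∈ U_M` and an arbitrary tuple `x` of elements of `A`). -/
theorem gamma_assoc {K : Type*} [Field K] {A : Type*} [AddCommGroup A] [Module K A]
    {U : ℕ → Type*} [∀ p, Nonempty (U p)] (S : PreOperadicSystem U)
    (k : ℕ) (hk : 0 < k)
    (n : ℕ → ℕ) (hn : ∀ i < k, 0 < n i)
    (m : ℕ → ℕ) (hm : ∀ j < psum n k, 0 < m j)
    (f : U k → MultilinearMap K (fun _ : Fin k => A) A)
    (g : ∀ i : ℕ, U (n i) → MultilinearMap K (fun _ : Fin (n i) => A) A)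
    (h : ∀ j : ℕ, U (m j) → MultilinearMap K (fun _ : Fin (m j) => A) A)
    (hc : psum m (psum n k) = psum (Tseq n m) k)
    (r : U (psum m (psum n k))) (x : ℕ → A) :
    -- LHS : `γ(γ(f; g₀,…,g_{k-1}); h₀,…,h_{N-1})` evaluated at `(r; x)`
    f (S.R0 k n (S.R0 (psum n k) m r))
      (fun i : Fin k =>
        g i.1 (S.Ri k n i.1 (S.R0 (psum n k) m r))
          (fun t : Fin (n i.1) =>
            h (psum n i.1 + t.1) (S.Ri (psum n k) m (psum n i.1 + t.1) r)
              (fun s : Fin (m (psum n i.1 + t.1)) =>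
                x (psum m (psum n i.1 + t.1) + s.1))))
    -- RHS : `γ(f; γ(g₀; h's), …, γ(g_{k-1}; h's))` evaluated at `(r; x)`
    = f (S.R0 k (Tseq n m) (cast (congrArg U hc) r))
        (fun i : Fin k =>
          g i.1
            (S.R0 (n i.1) (shiftSeq n m i.1)
              (S.Ri k (Tseq n m) i.1 (cast (congrArg U hc) r)))
            (fun t : Fin (n i.1) =>
              h (psum n i.1 + t.1)
                (S.Ri (n i.1) (shiftSeq n m i.1) t.1
                  (S.Ri k (Tseq n m) i.1 (cast (congrArg U hc) r)))
                (fun s : Fin (m (psum n i.1 + t.1)) =>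
                  x (psum (Tseq n m) i.1 + psum (shiftSeq n m i.1) t.1 + s.1)))) := by
  rw [S.idem k n m hk hn hm hc r]
  congr 1
  funext i
  rw [S.comm k n m i.1 hk hn hm i.2 hc r]
  congr 1
  funext t
  rw [S.closure k n m i.1 t.1 hk hn hm i.2 t.2 hc r]
  congr 1
  funext s
  congr 1
  rw [psum_Tseq, psum_add]
  rfl
end

section
/- (The canonical 2-cochain is a multiplication on the dendriform-dialgebra cochain operad.) Let E be a dendriform dialgebra over a field K, and let π ∈ C(2) be defined by π(r; x, y) = x ≺ y + x ≻ y for r ∈ C₂ and x, y ∈ E. Then γ(π; π, Id_E) = γ(π; Id_E, π) in C(3). -/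
/-- (The canonical 2-cochain is a multiplication on the
dendriform-dialgebra cochain operad.)  Let `E` be a dendriform dialgebra over `K`
(operations `lp` = ≺, `rp` = ≻) and let `π ∈ C(2)` be the 2-cochain
`π(r; x, y) = x ≺ y + x ≻ y` for `r ∈ C₂ = {1, 2}`.  Then
`γ(π; π, Id_E) = γ(π; Id_E, π)` in `C(3)`, i.e. for all `r ∈ C₃ = {1, 2, 3}` and all
`x, y, z ∈ E`:
`π(R₀(2;2,1)(r); π(R₁(2;2,1)(r); x, y), Id_E(R₂(2;2,1)(r); z))
  = π(R₀(2;1,2)(r); Id_E(R₁(2;1,2)(r); x), π(R₂(2;1,2)(r); y, z))`.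
The six structure functions (instances of `R₀(r) = i ↔ N_{i-1}+1 ≤ r ≤ N_i` and of the
piecewise formula for `R_j`) are recorded by their values on `C₃`. -/
theorem didend_pi_is_multiplication {K E : Type*} [Field K] [AddCommGroup E] [Module K E]
    (lp rp : E →ₗ[K] E →ₗ[K] E)
    (ax1 : ∀ x y z : E, lp (lp x y) z = lp x (lp y z + rp y z))
    (ax2 : ∀ x y z : E, lp (rp x y) z = rp x (lp y z))
    (ax3 : ∀ x y z : E, rp (lp x y + rp x y) z = rp x (rp y z))
    -- the multiplication `π ∈ C(2)` and the canonical 1-cochain `Id_E ∈ C(1)`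
    (π : ℕ → E → E → E) (hπ : ∀ (u : ℕ) (x y : E), π u x y = lp x y + rp x y)
    (IdE : ℕ → E → E) (hId : ∀ (u : ℕ) (x : E), IdE u x = x)
    -- `R₀(2; 2, 1) : C₃ → C₂`
    (A21 : ℕ → ℕ) (hA21 : ∀ r ∈ Finset.Icc 1 3, A21 r = if r ≤ 2 then 1 else 2)
    -- `R₁(2; 2, 1) : C₃ → C₂`
    (B21 : ℕ → ℕ) (hB21 : ∀ r ∈ Finset.Icc 1 3, B21 r = if r ≤ 2 then r else 2)
    -- `R₂(2; 2, 1) : C₃ → C₁`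
    (C21 : ℕ → ℕ) (hC21 : ∀ r ∈ Finset.Icc 1 3, C21 r = 1)
    -- `R₀(2; 1, 2) : C₃ → C₂`
    (A12 : ℕ → ℕ) (hA12 : ∀ r ∈ Finset.Icc 1 3, A12 r = if r ≤ 1 then 1 else 2)
    -- `R₁(2; 1, 2) : C₃ → C₁`
    (B12 : ℕ → ℕ) (hB12 : ∀ r ∈ Finset.Icc 1 3, B12 r = 1)
    -- `R₂(2; 1, 2) : C₃ → C₂`
    (C12 : ℕ → ℕ) (hC12 : ∀ r ∈ Finset.Icc 1 3, C12 r = if r ≤ 1 then 1 else r - 1) :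
    ∀ r ∈ Finset.Icc 1 3, ∀ x y z : E,
      π (A21 r) (π (B21 r) x y) (IdE (C21 r) z)
        = π (A12 r) (IdE (B12 r) x) (π (C12 r) y z) := by
  intro r hr x y z
  simp only [hπ, hId]
  have h := ax3 x y z
  calc lp (lp x y + rp x y) z + rp (lp x y + rp x y) z
      = lp (lp x y) z + lp (rp x y) z + rp x (rp y z) := by
        rw [h, map_add, LinearMap.add_apply]
    _ = lp x (lp y z + rp y z) + (rp x (lp y z) + rp x (rp y z)) := by
        rw [ax1, ax2]; abel
    _ = lp x (lp y z + rp y z) + rp x (lp y z + rp y z) := by rw [map_add (rp x)]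
end

section
/- (The canonical 2-cochain is a multiplication on the dendriform-trialgebra cochain operad.) Let D be a dendriform trialgebra over a field K, and let π ∈ C(2) be defined by π(X; x, y) = x ≺ y + x · y + x ≻ y for X ∈ P₂ and x, y ∈ D. Then γ(π; π, Id_D) = γ(π; Id_D, π) in C(3). -/
/-- Partial sums of the sequence `(2, 1)`. -/
def S21 : ℕ → ℕ := fun i => if i = 0 then 0 else if i = 1 then 2 else 3

/-- Partial sums of the sequence `(1, 2)`. -/
def S12 : ℕ → ℕ := fun i => if i = 0 then 0 else if i = 1 then 1 else 3

/-- (The canonical 2-cochain is a multiplication on the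
dendriform-trialgebra cochain operad.)  Let `D` be a dendriform trialgebra over `K`
(operations `lp` = ≺, `rp` = ≻, `mp` = ·) and let `π ∈ C(2)` be the 2-cochain
`π(X; x, y) = x ≺ y + x · y + x ≻ y` for `X ∈ P₂`.  Then
`γ(π; π, Id_D) = γ(π; Id_D, π)` in `C(3)`, i.e. for every non-empty `X ⊆ {1,2,3}` and
all `x, y, z ∈ D`:
`π(R₀(2;2,1)(X); π(R₁(2;2,1)(X); x, y), Id_D(R₂(2;2,1)(X); z))
  = π(R₀(2;1,2)(X); Id_D(R₁(2;1,2)(X); x), π(R₂(2;1,2)(X); y, z))`. -/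
theorem tridend_pi_is_multiplication {K D : Type*} [Field K] [AddCommGroup D] [Module K D]
    (lp rp mp : D →ₗ[K] D →ₗ[K] D)
    (st : D → D → D) (hst : ∀ a b : D, st a b = lp a b + mp a b + rp a b)
    (ax1 : ∀ x y z : D, lp (lp x y) z = lp x (st y z))
    (ax2 : ∀ x y z : D, lp (rp x y) z = rp x (lp y z))
    (ax3 : ∀ x y z : D, rp (st x y) z = rp x (rp y z))
    (ax4 : ∀ x y z : D, mp (rp x y) z = rp x (mp y z))
    (ax5 : ∀ x y z : D, mp (lp x y) z = mp x (rp y z))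
    (ax6 : ∀ x y z : D, lp (mp x y) z = mp x (lp y z))
    (ax7 : ∀ x y z : D, mp (mp x y) z = mp x (mp y z))
    -- the multiplication `π ∈ C(2)` and the canonical 1-cochain `Id_D ∈ C(1)`
    (π : Set ℕ → D → D → D) (hπ : ∀ (X : Set ℕ) (x y : D), π X x y = st x y)
    (IdD : Set ℕ → D → D) (hId : ∀ (X : Set ℕ) (x : D), IdD X x = x) :
    ∀ X : Set ℕ, X ⊆ Set.Icc 1 3 → X.Nonempty → ∀ x y z : D,
      π (R0sub S21 2 X) (π (Rjsub S21 3 2 1 X) x y) (IdD (Rjsub S21 3 1 2 X) z)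
        = π (R0sub S12 2 X) (IdD (Rjsub S12 3 1 1 X) x) (π (Rjsub S12 3 2 2 X) y z) := by
  intro X _ _ x y z
  simp only [hπ, hId, hst, map_add, LinearMap.add_apply] at *
  simp only [ax1, ax2, ax3, ax4, ax5, ax6, ax7, map_add, LinearMap.add_apply]
  abel
end

section
/- (The canonical 2-cochain is a multiplication on the cubical-trialgebra cochain operad.) Let A be a cubical trialgebra over a field K, and let π ∈ C(2) be defined by π(X; x, y) = x ⊣ y + x ⊥ y + x ⊢ y for X ∈ Q₂ and x, y ∈ A. Then γ(π; π, Id_A) = γ(π; Id_A, π) in C(3). -/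
/-- The function `R₀(k; n₁,…,n_k) : Q_N → Q_k` of the sign system, where `n` is the
sequence and `S` is its partial-sum function (`S i = n₁ + ⋯ + nᵢ`):
`(R₀(X))_i = ∏_{t=1}^{n_i} X_{S(i-1)+t}`.  Elements of `Q_n = {-1,0,+1}ⁿ` are modelled
as functions `ℕ → SignType` (components indexed `1,…,n`; other components irrelevant). -/
def R0Q (S : ℕ → ℕ) (n : ℕ → ℕ) (X : ℕ → SignType) : ℕ → SignType :=
  fun i => ∏ t ∈ Finset.Icc 1 (n i), X (S (i - 1) + t)

/-- The function `R_j(k; n₁,…,n_k) : Q_N → Q_{n_j}` of the sign system, where `S` is the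
partial-sum function of the sequence: `(R_j(X))_l = X_{S(j-1)+l}`. -/
def RjQ (S : ℕ → ℕ) (j : ℕ) (X : ℕ → SignType) : ℕ → SignType :=
  fun l => X (S (j - 1) + l)

/-- The sequence `(2, 1)`. -/
def n21 : ℕ → ℕ := fun i => if i = 1 then 2 else 1

/-- The sequence `(1, 2)`. -/
def n12 : ℕ → ℕ := fun i => if i = 1 then 1 else 2

/-- (The canonical 2-cochain is a multiplication on the
cubical-trialgebra cochain operad.)  Let `A` be a cubical trialgebra over `K`
(operations `lp` = ⊣, `rp` = ⊢, `mp` = ⊥) and let `π ∈ C(2)` be the 2-cochain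
`π(X; x, y) = x ⊣ y + x ⊥ y + x ⊢ y` for `X ∈ Q₂`.  Then
`γ(π; π, Id_A) = γ(π; Id_A, π)` in `C(3)`, i.e. for every `X ∈ Q₃` and all
`x, y, z ∈ A`:
`π(R₀(2;2,1)(X); π(R₁(2;2,1)(X); x, y), Id_A(R₂(2;2,1)(X); z))
  = π(R₀(2;1,2)(X); Id_A(R₁(2;1,2)(X); x), π(R₂(2;1,2)(X); y, z))`. -/
theorem tricub_pi_is_multiplication {K A : Type*} [Field K] [AddCommGroup A] [Module K A]
    (lp rp mp : A →ₗ[K] A →ₗ[K] A)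
    (st : A → A → A) (hst : ∀ a b : A, st a b = lp a b + mp a b + rp a b)
    (hax : ∀ o1 o2 : A →ₗ[K] A →ₗ[K] A,
      (o1 = lp ∨ o1 = rp ∨ o1 = mp) → (o2 = lp ∨ o2 = rp ∨ o2 = mp) →
      ∀ x y z : A, o2 (o1 x y) z = o1 x (o2 y z))
    -- the multiplication `π ∈ C(2)` and the canonical 1-cochain `Id_A ∈ C(1)`
    (π : (ℕ → SignType) → A → A → A)
    (hπ : ∀ (X : ℕ → SignType) (x y : A), π X x y = st x y)
    (IdA : (ℕ → SignType) → A → A)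
    (hId : ∀ (X : ℕ → SignType) (x : A), IdA X x = x) :
    ∀ X : ℕ → SignType, ∀ x y z : A,
      π (R0Q S21 n21 X) (π (RjQ S21 1 X) x y) (IdA (RjQ S21 2 X) z)
        = π (R0Q S12 n12 X) (IdA (RjQ S12 1 X) x) (π (RjQ S12 2 X) y z) := by
  intro X x y z
  simp only [hπ, hId, hst, map_add, LinearMap.add_apply]
  rw [hax lp lp (.inl rfl) (.inl rfl), hax lp mp (.inl rfl) (.inr (.inr rfl)),
    hax lp rp (.inl rfl) (.inr (.inl rfl)), hax mp lp (.inr (.inr rfl)) (.inl rfl),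
    hax mp mp (.inr (.inr rfl)) (.inr (.inr rfl)), hax mp rp (.inr (.inr rfl)) (.inr (.inl rfl)),
    hax rp lp (.inr (.inl rfl)) (.inl rfl), hax rp mp (.inr (.inl rfl)) (.inr (.inr rfl)),
    hax rp rp (.inr (.inl rfl)) (.inr (.inl rfl))]
  abel
end

section
/- (The dendriform-dialgebra cochain differential squares to zero.) Let E be a dendriform dialgebra over a field K. For f ∈ C(n), define δf ∈ C(n+1) by (δf)(r; a₁,…,a_{n+1}) = a₁ ∗ f(d₀(r); a₂,…,a_{n+1}) + Σ_{i=1}^{n} (−1)ⁱ f(dᵢ(r); a₁,…,a_{i−1}, aᵢ ∗ a_{i+1}, a_{i+2},…,a_{n+1}) + (−1)^{n+1} f(d_{n+1}(r); a₁,…,a_n) ∗ a_{n+1}, for r ∈ C_{n+1} and a₁,…,a_{n+1} ∈ E. Then δ(δf) = 0 for every n ≥ 1 and every f ∈ C(n). -/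
/-- The dendriform-dialgebra cochain differential `δ : C(p) → C(p+1)`, acting on
cochains recorded as raw functions (an element of `C(p)` reads the `C_{p+1}`-component
as a natural number `r ∈ {1,…,p+1}` and a tuple as a function `ℕ → E`, positions
`1,…,p`):
`(δf)(r; a₁,…,a_{p+1}) = a₁ ∗ f(d₀(r); a₂,…,a_{p+1})
  + ∑_{i=1}^{p} (−1)ⁱ f(dᵢ(r); a₁,…,aᵢ ∗ a_{i+1},…,a_{p+1})
  + (−1)^{p+1} f(d_{p+1}(r); a₁,…,a_p) ∗ a_{p+1}`,
where `d₀(r) = max(r−1,1)`, `dᵢ(r) = r` if `r ≤ i` and `r − 1` if `r ≥ i+1`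
(for `1 ≤ i ≤ p`), and `d_{p+1}(r) = min(r,p)`. -/
def dendDelta {E : Type*} [AddCommGroup E] (st : E → E → E) (p : ℕ)
    (f : ℕ → (ℕ → E) → E) : ℕ → (ℕ → E) → E :=
  fun r a =>
    st (a 1) (f (max (r - 1) 1) (fun t => a (t + 1)))
    + ∑ i ∈ Finset.Icc 1 p,
        (-1 : ℤ) ^ i •
          f (if r ≤ i then r else r - 1)
            (fun t => if t < i then a t else if t = i then st (a i) (a (i + 1)) else a (t + 1))
    + (-1 : ℤ) ^ (p + 1) • st (f (min r p) a) (a (p + 1))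

section
variable {E : Type*} [AddCommGroup E]

/-- merged tuple: slots `i` and `i+1` multiplied into slot `i`. -/
def mg (st : E → E → E) (i : ℕ) (a : ℕ → E) : ℕ → E :=
  fun t => if t < i then a t else if t = i then st (a i) (a (i + 1)) else a (t + 1)

/-- the `i`-th face term (unsigned) of the differential. -/
def TT (st : E → E → E) (p : ℕ) (g : ℕ → (ℕ → E) → E) (r : ℕ) (a : ℕ → E) (i : ℕ) : E :=
  if i = 0 then st (a 1) (g (max (r - 1) 1) (fun t => a (t + 1)))
  else if i ≤ p then g (if r ≤ i then r else r - 1) (mg st i a)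
  else st (g (min r p) a) (a (p + 1))

lemma delta_eq (st : E → E → E) (p : ℕ) (g : ℕ → (ℕ → E) → E) (r : ℕ) (a : ℕ → E) :
    dendDelta st p g r a = ∑ i ∈ Finset.range (p + 2), (-1 : ℤ) ^ i • TT st p g r a i := by
  have hset : Finset.range (p + 2) = insert 0 (insert (p + 1) (Finset.Icc 1 p)) := by
    ext x; simp only [Finset.mem_range, Finset.mem_insert, Finset.mem_Icc]; omega
  rw [hset, Finset.sum_insert (by simp), Finset.sum_insert (by simp [Finset.mem_Icc])]
  have h0 : TT st p g r a 0 = st (a 1) (g (max (r - 1) 1) (fun t => a (t + 1))) := by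
    simp [TT]
  have hp : TT st p g r a (p + 1) = st (g (min r p) a) (a (p + 1)) := by
    simp [TT]
  have hm : ∀ i ∈ Finset.Icc 1 p, (-1 : ℤ) ^ i • TT st p g r a i
      = (-1 : ℤ) ^ i • g (if r ≤ i then r else r - 1)
          (fun t => if t < i then a t else if t = i then st (a i) (a (i + 1)) else a (t + 1)) := by
    intro i hi
    simp only [Finset.mem_Icc] at hi
    rw [TT, if_neg (by omega), if_pos hi.2]; rfl
  rw [Finset.sum_congr rfl hm, h0, hp]
  show dendDelta st p g r a = _ + (_ + _)
  rw [dendDelta]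
  simp only [pow_zero, one_smul]
  abel

/-- composite face terms of `δ∘δ` (unsigned): outer face `i ∈ [0,n+2]`,
inner face `j ∈ [0,n+1]`. -/
def SS (st : E → E → E) (n : ℕ) (g : ℕ → (ℕ → E) → E) (r : ℕ) (a : ℕ → E) (i j : ℕ) : E :=
  if i = 0 then st (a 1) (TT st n g (max (r - 1) 1) (fun t => a (t + 1)) j)
  else if i ≤ n + 1 then TT st n g (if r ≤ i then r else r - 1) (mg st i a) j
  else st (TT st n g (min r (n + 1)) a j) (a (n + 2))

lemma TT_outer (st : E → E → E)
    (hl : ∀ x y z : E, st (x + y) z = st x z + st y z)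
    (hr : ∀ x y z : E, st x (y + z) = st x y + st x z)
    (n : ℕ) (g : ℕ → (ℕ → E) → E) (r : ℕ) (a : ℕ → E) (i : ℕ) (hi : i < n + 3) :
    TT st (n + 1) (dendDelta st n g) r a i
      = ∑ j ∈ Finset.range (n + 2), (-1 : ℤ) ^ j • SS st n g r a i j := by
  rcases eq_or_ne i 0 with rfl | h0
  · have : TT st (n + 1) (dendDelta st n g) r a 0
        = st (a 1) (dendDelta st n g (max (r - 1) 1) (fun t => a (t + 1))) := by
      simp [TT]
    rw [this, delta_eq]
    let φ : E →+ E := AddMonoidHom.mk' (st (a 1)) (fun y z => hr (a 1) y z)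
    have : st (a 1) (∑ j ∈ Finset.range (n + 2),
        (-1 : ℤ) ^ j • TT st n g (max (r - 1) 1) (fun t => a (t + 1)) j)
        = φ (∑ j ∈ Finset.range (n + 2),
        (-1 : ℤ) ^ j • TT st n g (max (r - 1) 1) (fun t => a (t + 1)) j) := rfl
    rw [this, map_sum]
    refine Finset.sum_congr rfl (fun j hj => ?_)
    rw [map_zsmul]
    simp [SS, φ, AddMonoidHom.mk'_apply]
  · by_cases h1 : i ≤ n + 1
    · have : TT st (n + 1) (dendDelta st n g) r a i
          = dendDelta st n g (if r ≤ i then r else r - 1) (mg st i a) := by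
        rw [TT, if_neg h0, if_pos h1]
      rw [this, delta_eq]
      refine Finset.sum_congr rfl (fun j hj => ?_)
      rw [SS, if_neg h0, if_pos h1]
    · have hi2 : i = n + 2 := by omega
      subst hi2
      have : TT st (n + 1) (dendDelta st n g) r a (n + 2)
          = st (dendDelta st n g (min r (n + 1)) a) (a (n + 2)) := by
        rw [TT, if_neg (by omega), if_neg (by omega)]
      rw [this, delta_eq]
      let ψ : E →+ E := AddMonoidHom.mk' (fun x => st x (a (n + 2))) (fun y z => hl y z (a (n + 2)))
      have hψ : st (∑ j ∈ Finset.range (n + 2),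
          (-1 : ℤ) ^ j • TT st n g (min r (n + 1)) a j) (a (n + 2))
          = ψ (∑ j ∈ Finset.range (n + 2), (-1 : ℤ) ^ j • TT st n g (min r (n + 1)) a j) := rfl
      rw [hψ, map_sum]
      refine Finset.sum_congr rfl (fun j hj => ?_)
      rw [map_zsmul]
      simp [SS, ψ, AddMonoidHom.mk'_apply]

set_option maxHeartbeats 2000000 in
lemma SS_swap (st : E → E → E)
    (ha : ∀ x y z : E, st (st x y) z = st x (st y z))
    (n : ℕ) (hn : 1 ≤ n) (g : ℕ → (ℕ → E) → E)
    (hg : ∀ u (v w : ℕ → E), (∀ t, 1 ≤ t → t ≤ n → v t = w t) → g u v = g u w)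
    (r : ℕ) (a : ℕ → E) (i j : ℕ) (hij : i ≤ j) (hj : j ≤ n + 1) :
    SS st n g r a i j = SS st n g r a (j + 1) i := by
  rcases eq_or_ne i 0 with rfl | hi0
  · rcases eq_or_ne j 0 with rfl | hj0
    · -- case A : i = 0, j = 0
      have L : SS st n g r a 0 0
          = st (a 1) (st (a 2) (g (max (max (r - 1) 1 - 1) 1) (fun t => a (t + 1 + 1)))) := by
        rw [SS, if_pos rfl, TT, if_pos rfl]
      have R : SS st n g r a 1 0
          = st (st (a 1) (a 2)) (g (max ((if r ≤ 1 then r else r - 1) - 1) 1)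
              (fun t => mg st 1 a (t + 1))) := by
        rw [SS, if_neg (by omega), if_pos (by omega), TT, if_pos rfl]
        rw [show mg st 1 a 1 = st (a 1) (a (1 + 1)) from by
          rw [mg, if_neg (by omega), if_pos rfl]]
      show SS st n g r a 0 0 = SS st n g r a 1 0
      rw [L, R, ha]
      congr 1
      rw [show (max (max (r - 1) 1 - 1) 1) = (max ((if r ≤ 1 then r else r - 1) - 1) 1) from by
        split_ifs <;> omega]
      refine congrArg _ (hg _ _ _ (fun t h1 h2 => ?_))
      rw [mg, if_neg (by omega), if_neg (by omega)]
    · rcases eq_or_ne j (n + 1) with rfl | hjn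
      · -- case C : i = 0, j = n + 1
        have L : SS st n g r a 0 (n + 1)
            = st (a 1) (st (g (min (max (r - 1) 1) n) (fun t => a (t + 1))) (a (n + 1 + 1))) := by
          rw [SS, if_pos rfl, TT, if_neg (by omega), if_neg (by omega)]
        have R : SS st n g r a (n + 2) 0
            = st (st (a 1) (g (max (min r (n + 1) - 1) 1) (fun t => a (t + 1)))) (a (n + 2)) := by
          rw [SS, if_neg (by omega), if_neg (by omega), TT, if_pos rfl]
        show SS st n g r a 0 (n + 1) = SS st n g r a (n + 2) 0
        rw [L, R, ha]
        rw [show (min (max (r - 1) 1) n) = (max (min r (n + 1) - 1) 1) from by omega]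
      · -- case B : i = 0, 1 ≤ j ≤ n
        have hj1 : 1 ≤ j := by omega
        have hjn' : j ≤ n := by omega
        have L : SS st n g r a 0 j
            = st (a 1) (g (if max (r - 1) 1 ≤ j then max (r - 1) 1 else max (r - 1) 1 - 1)
                (mg st j (fun t => a (t + 1)))) := by
          rw [SS, if_pos rfl, TT, if_neg (by omega), if_pos hjn']
        have R : SS st n g r a (j + 1) 0
            = st (a 1) (g (max ((if r ≤ j + 1 then r else r - 1) - 1) 1)
                (fun t => mg st (j + 1) a (t + 1))) := by
          rw [SS, if_neg (by omega), if_pos (by omega), TT, if_pos rfl]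
          rw [show mg st (j + 1) a 1 = a 1 from by rw [mg, if_pos (by omega)]]
        rw [L, R]
        congr 1
        rw [show (if max (r - 1) 1 ≤ j then max (r - 1) 1 else max (r - 1) 1 - 1)
            = (max ((if r ≤ j + 1 then r else r - 1) - 1) 1) from by split_ifs <;> omega]
        refine congrArg _ (funext fun t => ?_)
        simp only [mg]
        split_ifs <;>
          first
            | rfl
            | (exfalso; omega)
            | (congr <;> omega)
            | (rw [ha]; first | rfl | (congr <;> omega))
  · rcases eq_or_ne j (n + 1) with rfl | hjn
    · rcases eq_or_ne i (n + 1) with rfl | hin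
      · -- case F : i = j = n + 1
        have L : SS st n g r a (n + 1) (n + 1)
            = st (g (min (if r ≤ n + 1 then r else r - 1) n) (mg st (n + 1) a))
                (st (a (n + 1)) (a (n + 1 + 1))) := by
          rw [SS, if_neg (by omega), if_pos (by omega), TT, if_neg (by omega),
            if_neg (by omega)]
          rw [show mg st (n + 1) a (n + 1) = st (a (n + 1)) (a (n + 1 + 1)) from by
            rw [mg, if_neg (by omega), if_pos rfl]]
        have R : SS st n g r a (n + 2) (n + 1)
            = st (st (g (min (min r (n + 1)) n) a) (a (n + 1))) (a (n + 2)) := by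
          rw [SS, if_neg (by omega), if_neg (by omega), TT, if_neg (by omega),
            if_neg (by omega)]
        show SS st n g r a (n + 1) (n + 1) = SS st n g r a (n + 2) (n + 1)
        rw [L, R, ha]
        rw [show (min (if r ≤ n + 1 then r else r - 1) n) = (min (min r (n + 1)) n) from by
          split_ifs <;> omega]
        congr 1
        exact hg _ _ _ (fun t h1 h2 => by rw [mg, if_pos (by omega)])
      · -- case E : 1 ≤ i ≤ n, j = n + 1
        have hin' : i ≤ n := by omega
        have L : SS st n g r a i (n + 1)
            = st (g (min (if r ≤ i then r else r - 1) n) (mg st i a)) (a (n + 1 + 1)) := by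
          rw [SS, if_neg hi0, if_pos (by omega), TT, if_neg (by omega), if_neg (by omega)]
          rw [show mg st i a (n + 1) = a (n + 1 + 1) from by
            rw [mg, if_neg (by omega), if_neg (by omega)]]
        have R : SS st n g r a (n + 2) i
            = st (g (if min r (n + 1) ≤ i then min r (n + 1) else min r (n + 1) - 1)
                (mg st i a)) (a (n + 2)) := by
          rw [SS, if_neg (by omega), if_neg (by omega), TT, if_neg hi0, if_pos hin']
        rw [L, R]
        congr 3
        split_ifs <;> omega
    · -- case D : 1 ≤ i ≤ j ≤ n
      have hjn' : j ≤ n := by omega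
      have L : SS st n g r a i j
          = g (if (if r ≤ i then r else r - 1) ≤ j then (if r ≤ i then r else r - 1)
              else (if r ≤ i then r else r - 1) - 1) (mg st j (mg st i a)) := by
        rw [SS, if_neg hi0, if_pos (by omega), TT, if_neg (by omega), if_pos hjn']
      have R : SS st n g r a (j + 1) i
          = g (if (if r ≤ j + 1 then r else r - 1) ≤ i then (if r ≤ j + 1 then r else r - 1)
              else (if r ≤ j + 1 then r else r - 1) - 1) (mg st i (mg st (j + 1) a)) := by
        rw [SS, if_neg (by omega), if_pos (by omega), TT, if_neg hi0, if_pos (by omega)]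
      rw [L, R]
      rw [show (if (if r ≤ i then r else r - 1) ≤ j then (if r ≤ i then r else r - 1)
          else (if r ≤ i then r else r - 1) - 1)
          = (if (if r ≤ j + 1 then r else r - 1) ≤ i then (if r ≤ j + 1 then r else r - 1)
          else (if r ≤ j + 1 then r else r - 1) - 1) from by split_ifs <;> omega]
      refine congrArg _ (funext fun t => ?_)
      simp only [mg]
      split_ifs <;>
        first
          | rfl
          | (exfalso; omega)
          | (congr <;> omega)
          | (rw [ha]; first | rfl | (congr <;> omega))

lemma abstract_key (st : E → E → E)
    (hl : ∀ x y z : E, st (x + y) z = st x z + st y z)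
    (hr : ∀ x y z : E, st x (y + z) = st x y + st x z)
    (ha : ∀ x y z : E, st (st x y) z = st x (st y z))
    (n : ℕ) (hn : 1 ≤ n) (g : ℕ → (ℕ → E) → E)
    (hg : ∀ u (v w : ℕ → E), (∀ t, 1 ≤ t → t ≤ n → v t = w t) → g u v = g u w)
    (r : ℕ) (a : ℕ → E) :
    dendDelta st (n + 1) (dendDelta st n g) r a = 0 := by
  rw [delta_eq]
  have step : ∀ i ∈ Finset.range (n + 3),
      (-1 : ℤ) ^ i • TT st (n + 1) (dendDelta st n g) r a i
        = ∑ j ∈ Finset.range (n + 2), (-1 : ℤ) ^ (i + j) • SS st n g r a i j := by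
    intro i hi
    rw [TT_outer st hl hr n g r a i (Finset.mem_range.mp hi), Finset.smul_sum]
    refine Finset.sum_congr rfl (fun j hj => ?_)
    rw [smul_smul, ← pow_add]
  rw [Finset.sum_congr rfl step, ← Finset.sum_product']
  set F : ℕ × ℕ → E := fun q => (-1 : ℤ) ^ (q.1 + q.2) • SS st n g r a q.1 q.2 with hF
  have key : ∀ q : ℕ × ℕ, q ∈ Finset.range (n + 3) ×ˢ Finset.range (n + 2) →
      q.1 ≤ q.2 → F q + F (q.2 + 1, q.1) = 0 := by
    rintro ⟨i, j⟩ hq hij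
    simp only [Finset.mem_product, Finset.mem_range] at hq
    have hswap := SS_swap st ha n hn g hg r a i j hij (by omega)
    simp only [hF]
    rw [← hswap, show j + 1 + i = (i + j) + 1 by omega, pow_succ]
    simp [add_comm]
  refine Finset.sum_involution
    (fun q _ => if q.1 ≤ q.2 then (q.2 + 1, q.1) else (q.2, q.1 - 1)) ?_ ?_ ?_ ?_
  · rintro ⟨i, j⟩ hq
    simp only [Finset.mem_product, Finset.mem_range] at hq
    by_cases h : i ≤ j
    · simpa [h] using key (i, j) (by simp [Finset.mem_product, Finset.mem_range]; omega) h
    · have h2 : j ≤ i - 1 := by omega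
      have := key (j, i - 1) (by simp [Finset.mem_product, Finset.mem_range]; omega) h2
      simp only [h, if_neg]
      rw [show (i - 1) + 1 = i from by omega] at this
      simpa [add_comm] using this
  · rintro ⟨i, j⟩ hq _
    by_cases h : i ≤ j <;> simp [h, Prod.ext_iff] <;> omega
  · rintro ⟨i, j⟩ hq
    simp only [Finset.mem_product, Finset.mem_range] at hq ⊢
    by_cases h : i ≤ j <;> simp [h] <;> omega
  · rintro ⟨i, j⟩ hq
    by_cases h : i ≤ j
    · simp [h, show ¬ (j + 1 ≤ i) by omega]
    · simp [h, show j ≤ i - 1 by omega, show j + 1 ≤ i by omega]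
      omega

end

/-- (The dendriform-dialgebra cochain differential squares to zero.)
Let `E` be a dendriform dialgebra over a field `K` (operations `lp` = ≺, `rp` = ≻,
`x ∗ y = x ≺ y + x ≻ y`).  For every `n ≥ 1` and every
`f ∈ C(n) = Hom(K[C_n] ⊗ Eⁿ, E)` (a function from `C_n` to multilinear maps `Eⁿ → E`),
one has `δ(δf) = 0` in `C(n+2)`, i.e. `δ(δf)(r; a₁,…,a_{n+2}) = 0` for all
`r ∈ C_{n+2}` and all `a₁,…,a_{n+2} ∈ E`. -/
theorem didend_delta_squared_zero {K E : Type*} [Field K] [AddCommGroup E] [Module K E]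
    (lp rp : E →ₗ[K] E →ₗ[K] E)
    (ax1 : ∀ x y z : E, lp (lp x y) z = lp x (lp y z + rp y z))
    (ax2 : ∀ x y z : E, lp (rp x y) z = rp x (lp y z))
    (ax3 : ∀ x y z : E, rp (lp x y + rp x y) z = rp x (rp y z))
    (n : ℕ) (hn : 1 ≤ n)
    (f : ℕ → MultilinearMap K (fun _ : Fin n => E) E) :
    ∀ r ∈ Finset.Icc 1 (n + 2), ∀ a : ℕ → E,
      dendDelta (fun x y => lp x y + rp x y) (n + 1)
        (dendDelta (fun x y => lp x y + rp x y) n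
          (fun u v => f u (fun i : Fin n => v (i.1 + 1))))
        r a = 0 := by
  intro r _ a
  set st : E → E → E := fun x y => lp x y + rp x y with hst
  have hl : ∀ x y z : E, st (x + y) z = st x z + st y z := by
    intro x y z; simp only [hst, map_add, LinearMap.add_apply]; abel
  have hr : ∀ x y z : E, st x (y + z) = st x y + st x z := by
    intro x y z; simp only [hst, map_add]; abel
  have ha : ∀ x y z : E, st (st x y) z = st x (st y z) := by
    intro x y z
    have h3 := ax3 x y z
    simp only [map_add, LinearMap.add_apply] at h3
    simp only [hst, map_add, LinearMap.add_apply, ax1 x y z, ax2 x y z]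
    rw [← h3]
    abel
  exact abstract_key st hl hr ha n hn _
    (fun u v w h => by
      show f u (fun i : Fin n => v (i.1 + 1)) = f u (fun i : Fin n => w (i.1 + 1))
      exact congrArg (f u) (funext fun (i : Fin n) => h (i.1 + 1) (by omega) (by omega))) r a
end

section
/- (Associativity of the cup product on dendriform-dialgebra cochains.) Let E be a dendriform dialgebra over a field K. For f ∈ C(m) and g ∈ C(n), define f ⌣ g ∈ C(m+n) by (f ⌣ g)(r; a₁,…,a_{m+n}) = f(min(r, m); a₁,…,a_m) ∗ g(max(r − m, 1); a_{m+1},…,a_{m+n}) for r ∈ C_{m+n} and a₁,…,a_{m+n} ∈ E. Then for all f ∈ C(m), g ∈ C(n), h ∈ C(p): (f ⌣ g) ⌣ h = f ⌣ (g ⌣ h) in C(m+n+p). -/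
/-- The cup product `⌣ : C(m) ⊗ C(n) → C(m+n)` on dendriform-dialgebra cochains,
acting on cochains recorded as raw functions (an element of `C(p)` reads the
`C_p`-component as a natural number `r ∈ {1,…,p}` and a tuple as a function `ℕ → E`,
positions `1,…,p`):
`(f ⌣ g)(r; a₁,…,a_{m+n}) = f(min(r,m); a₁,…,a_m) ∗ g(max(r−m,1); a_{m+1},…,a_{m+n})`. -/
def dendCup {E : Type*} (st : E → E → E) (m : ℕ)
    (f g : ℕ → (ℕ → E) → E) : ℕ → (ℕ → E) → E :=
  fun r a => st (f (min r m) a) (g (max (r - m) 1) (fun t => a (t + m)))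

/-- (Associativity of the cup product on dendriform-dialgebra
cochains.)  Let `E` be a dendriform dialgebra over a field `K` (operations `lp` = ≺,
`rp` = ≻, `x ∗ y := x ≺ y + x ≻ y`).  For all `f ∈ C(m)`, `g ∈ C(n)`, `h ∈ C(p)`
(functions from `C_m`, `C_n`, `C_p` to multilinear maps):
`(f ⌣ g) ⌣ h = f ⌣ (g ⌣ h)` in `C(m+n+p)`, i.e. the two sides agree at every
`r ∈ C_{m+n+p}` and every tuple `a₁,…,a_{m+n+p} ∈ E`. -/
theorem didend_cup_assoc {K E : Type*} [Field K] [AddCommGroup E] [Module K E]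
    (lp rp : E →ₗ[K] E →ₗ[K] E)
    (ax1 : ∀ x y z : E, lp (lp x y) z = lp x (lp y z + rp y z))
    (ax2 : ∀ x y z : E, lp (rp x y) z = rp x (lp y z))
    (ax3 : ∀ x y z : E, rp (lp x y + rp x y) z = rp x (rp y z))
    (m n p : ℕ) (hm : 1 ≤ m) (hn : 1 ≤ n) (hp : 1 ≤ p)
    (f : ℕ → MultilinearMap K (fun _ : Fin m => E) E)
    (g : ℕ → MultilinearMap K (fun _ : Fin n => E) E)
    (h : ℕ → MultilinearMap K (fun _ : Fin p => E) E) :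
    ∀ r ∈ Finset.Icc 1 (m + n + p), ∀ a : ℕ → E,
      dendCup (fun x y => lp x y + rp x y) (m + n)
        (dendCup (fun x y => lp x y + rp x y) m
          (fun u v => f u (fun i : Fin m => v (i.1 + 1)))
          (fun u v => g u (fun i : Fin n => v (i.1 + 1))))
        (fun u v => h u (fun i : Fin p => v (i.1 + 1)))
        r a
      = dendCup (fun x y => lp x y + rp x y) m
          (fun u v => f u (fun i : Fin m => v (i.1 + 1)))
          (dendCup (fun x y => lp x y + rp x y) n
            (fun u v => g u (fun i : Fin n => v (i.1 + 1)))
            (fun u v => h u (fun i : Fin p => v (i.1 + 1))))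
          r a := by
  intro r hr a
  simp only [dendCup]
  have h1 : min (min r (m + n)) m = min r m := by omega
  have h2 : max (min r (m + n) - m) 1 = min (max (r - m) 1) n := by omega
  have h3 : max (r - (m + n)) 1 = max (max (r - m) 1 - n) 1 := by omega
  have h4 : (fun i : Fin p => a (i.1 + 1 + (m + n))) = (fun i : Fin p => a (i.1 + 1 + n + m)) := by
    funext i; congr 1; omega
  rw [h1, h2, h3, h4]
  generalize f (min r m) (fun i : Fin m => a (i.1 + 1)) = x
  generalize g (min (max (r - m) 1) n) (fun i : Fin n => a (i.1 + 1 + m)) = y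
  generalize h (max (max (r - m) 1 - n) 1) (fun i : Fin p => a (i.1 + 1 + m + n)) = z
  rw [map_add, LinearMap.add_apply, ax1, ax2, ax3, map_add, map_add, add_assoc]
end
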